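/- arXiv:2107.10808 — 3 statements merged into one kernel-verified Lean document; each statement's English description precedes it below -/
import Mathlib

section
/- Let q ≥ 1 and let γ : [0, L] → ℝ² be a closed C² planar curve parametrized by arc length (γ(0) = γ(L), |γ'(s)| = 1 for all s). Then ∫₀^L |γ''(s)|^q ds ≥ (diam γ)^{1-q}, where diam γ = sup_{s,t} |γ(s) - γ(t)|. -/
open Real MeasureTheory Set

open scoped RealInnerProductSpace

/-!
Integrating `⟪γ'', γ - γ 0⟫` by parts along a closed unit-speed curve gives `-L`, and
`‖γ s - γ 0‖ ≤ diam γ`, so `L ≤ diam γ * ∫ ‖γ''‖`. Jensen's inequality for `x ↦ x ^ q` bounds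
`(∫ ‖γ''‖) ^ q` by `L ^ (q - 1) * ∫ ‖γ''‖ ^ q`, whence `L ≤ (diam γ) ^ q * ∫ ‖γ''‖ ^ q`.
Finally `diam γ ≤ L` since a unit-speed curve is `1`-Lipschitz.
-/

theorem diam_image_Icc_le_of_norm_deriv_le {E : Type*} [NormedAddCommGroup E] [NormedSpace ℝ E]
    {f : ℝ → E} {a b C : ℝ} (hab : a ≤ b)
    (hf : ∀ x ∈ Icc a b, DifferentiableAt ℝ f x) (bound : ∀ x ∈ Icc a b, ‖deriv f x‖ ≤ C) :
    Metric.diam (f '' Icc a b) ≤ C * (b - a) := by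
  have hC : 0 ≤ C := (norm_nonneg _).trans (bound a ⟨le_rfl, hab⟩)
  refine Metric.diam_le_of_forall_dist_le (by nlinarith) ?_
  rintro _ ⟨x, hx, rfl⟩ _ ⟨y, hy, rfl⟩
  calc dist (f x) (f y) ≤ C * dist x y := by
        simpa only [dist_eq_norm] using
          (convex_Icc a b).norm_image_sub_le_of_norm_deriv_le hf bound hy hx
    _ ≤ C * (b - a) := by gcongr; exact Real.dist_le_of_mem_Icc hx hy

section InnerProductSpace

variable {E : Type*} [NormedAddCommGroup E] [InnerProductSpace ℝ E]

theorem integral_inner_deriv_deriv_sub_eq {γ : ℝ → E} (hγ : ContDiff ℝ 2 γ) (p : E) (a b : ℝ) :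
    ∫ s in a..b, ⟪deriv (deriv γ) s, γ s - p⟫ =
      ⟪deriv γ b, γ b - p⟫ - ⟪deriv γ a, γ a - p⟫ - ∫ s in a..b, ‖deriv γ s‖ ^ 2 := by
  have hγ₁ : ContDiff ℝ 1 (deriv γ) := hγ.deriv'
  have hint₁ : IntervalIntegrable (fun s => ⟪deriv (deriv γ) s, γ s - p⟫) volume a b :=
    ((hγ₁.continuous_deriv_one).inner (hγ.continuous.sub continuous_const)).intervalIntegrable _ _
  have hint₂ : IntervalIntegrable (fun s => ‖deriv γ s‖ ^ 2) volume a b :=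
    (hγ₁.continuous.norm.pow 2).intervalIntegrable _ _
  rw [eq_sub_iff_add_eq', ← intervalIntegral.integral_add hint₂ hint₁]
  refine intervalIntegral.integral_eq_sub_of_hasDerivAt (f := fun s => ⟪deriv γ s, γ s - p⟫)
    (fun t _ => ?_) (hint₂.add hint₁)
  rw [← real_inner_self_eq_norm_sq]
  exact ((hγ₁.differentiable one_ne_zero t).hasDerivAt).inner ℝ
    ((hγ.differentiable (by norm_num) t).hasDerivAt.sub_const p)

theorem sub_le_diam_mul_integral_norm_deriv_deriv {γ : ℝ → E} {a b : ℝ} (hγ : ContDiff ℝ 2 γ)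
    (hab : a ≤ b) (hclosed : γ a = γ b) (hunit : ∀ s ∈ Icc a b, ‖deriv γ s‖ = 1) :
    b - a ≤ Metric.diam (γ '' Icc a b) * ∫ s in a..b, ‖deriv (deriv γ) s‖ := by
  have hunit_int : ∫ s in a..b, ‖deriv γ s‖ ^ 2 = b - a := by
    rw [intervalIntegral.integral_congr (g := fun _ => (1 : ℝ)), intervalIntegral.integral_const,
      smul_eq_mul, mul_one]
    intro s hs
    rw [uIcc_of_le hab] at hs
    simp [hunit s hs]
  have hibp := integral_inner_deriv_deriv_sub_eq hγ (γ a) a b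
  rw [← hclosed, sub_self, inner_zero_right, inner_zero_right, hunit_int] at hibp
  have hbdd : Bornology.IsBounded (γ '' Icc a b) := (isCompact_Icc.image hγ.continuous).isBounded
  calc b - a = ‖∫ s in a..b, ⟪deriv (deriv γ) s, γ s - γ a⟫‖ := by
        rw [hibp, Real.norm_eq_abs, abs_of_nonpos] <;> linarith
    _ ≤ ∫ s in a..b, Metric.diam (γ '' Icc a b) * ‖deriv (deriv γ) s‖ := by
      refine intervalIntegral.norm_integral_le_of_norm_le hab (.of_forall fun s hs => ?_)
        (((hγ.deriv'.continuous_deriv_one).norm.const_mul _).intervalIntegrable _ _)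
      rw [mul_comm]
      refine (norm_inner_le_norm _ _).trans (mul_le_mul_of_nonneg_left ?_ (norm_nonneg _))
      rw [← dist_eq_norm]
      exact Metric.dist_le_diam_of_mem hbdd (mem_image_of_mem _ (Ioc_subset_Icc_self hs))
        (mem_image_of_mem _ ⟨le_rfl, hab⟩)
    _ = _ := intervalIntegral.integral_const_mul _ _

end InnerProductSpace

theorem rpow_intervalIntegral_le_mul_intervalIntegral_rpow {f : ℝ → ℝ} {a b q : ℝ} (hab : a < b)
    (hq : 1 ≤ q) (hf : ∀ x ∈ Icc a b, 0 ≤ f x) (hfi : IntervalIntegrable f volume a b)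
    (hfqi : IntervalIntegrable (fun x => f x ^ q) volume a b) :
    (∫ x in a..b, f x) ^ q ≤ (b - a) ^ (q - 1) * ∫ x in a..b, f x ^ q := by
  have hjensen : (⨍ x in a..b, f x) ^ q ≤ ⨍ x in a..b, f x ^ q := by
    rw [uIoc_of_le hab.le]
    refine (convexOn_rpow hq).map_set_average_le
      (continuousOn_id.rpow_const fun _ _ => Or.inr (by linarith)) isClosed_Ici (by simp [hab])
      (by simp) ?_ hfi.1 hfqi.1
    exact (ae_restrict_iff' measurableSet_Ioc).2
      (.of_forall fun x hx => hf x (Ioc_subset_Icc_self hx))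
  have hba : 0 < b - a := sub_pos.2 hab
  rw [interval_average_eq_div, interval_average_eq_div,
    div_rpow (intervalIntegral.integral_nonneg hab.le hf) hba.le,
    div_le_div_iff₀ (by positivity) hba] at hjensen
  rw [rpow_sub_one hba.ne', div_mul_eq_mul_div, le_div_iff₀ hba]
  linarith

/-- For a closed C² planar curve `γ : [0,L] → ℝ²` parametrized by arc length
and `q ≥ 1`, one has `∫₀^L |γ''|^q ≥ (diam γ)^(1-q)`. -/
theorem curvature_integral_ge_diam_rpow (q L : ℝ) (hq : 1 ≤ q) (hL : 0 < L)
    (γ : ℝ → EuclideanSpace ℝ (Fin 2)) (hγ : ContDiff ℝ 2 γ)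
    (hclosed : γ 0 = γ L) (harc : ∀ s ∈ Set.Icc (0:ℝ) L, ‖deriv γ s‖ = 1) :
    (Metric.diam (γ '' Set.Icc (0:ℝ) L)) ^ (1 - q)
      ≤ ∫ s in (0:ℝ)..L, ‖deriv (deriv γ) s‖ ^ q := by
  set d := Metric.diam (γ '' Icc 0 L)
  set K := ∫ s in (0:ℝ)..L, ‖deriv (deriv γ) s‖
  set A := ∫ s in (0:ℝ)..L, ‖deriv (deriv γ) s‖ ^ q
  have hcont : Continuous fun s => ‖deriv (deriv γ) s‖ := hγ.deriv'.continuous_deriv_one.norm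
  have hK : 0 ≤ K := intervalIntegral.integral_nonneg hL.le fun _ _ => norm_nonneg _
  have hdL : d ≤ L := by
    simpa using diam_image_Icc_le_of_norm_deriv_le hL.le
      (fun x _ => hγ.differentiable two_ne_zero x) fun x hx => (harc x hx).le
  have hLK : L ≤ d * K := by
    simpa using sub_le_diam_mul_integral_norm_deriv_deriv hγ hL.le hclosed harc
  have hKA : K ^ q ≤ L ^ (q - 1) * A := by
    simpa using rpow_intervalIntegral_le_mul_intervalIntegral_rpow hL hq
      (fun _ _ => norm_nonneg _) (hcont.intervalIntegrable _ _)
      ((hcont.rpow_const fun _ => Or.inr (by linarith)).intervalIntegrable _ _)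
  have hd : 0 < d := pos_of_mul_pos_left (hL.trans_le hLK) hK
  have hLA : L ≤ d ^ q * A := by
    refine le_of_mul_le_mul_left ?_ (rpow_pos_of_pos hL (q - 1))
    calc L ^ (q - 1) * L = L ^ q := by rw [rpow_sub_one hL.ne', div_mul_cancel₀ _ hL.ne']
      _ ≤ (d * K) ^ q := rpow_le_rpow hL.le hLK (by linarith)
      _ = d ^ q * K ^ q := mul_rpow hd.le hK
      _ ≤ d ^ q * (L ^ (q - 1) * A) := by gcongr
      _ = L ^ (q - 1) * (d ^ q * A) := by ring
  calc d ^ (1 - q) = d / d ^ q := by rw [rpow_sub hd, rpow_one]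
    _ ≤ L / d ^ q := by gcongr
    _ ≤ A := by rwa [div_le_iff₀ (rpow_pos_of_pos hd q), mul_comm]
end

section
/- There is a constant C > 0 (depending only on d) such that for all F ∈ ℝ^{d×d} and all R ∈ SO(d): | |sym(Rᵀ F - Id)| - dist(F, SO(d)) | ≤ C |F - R|², where sym(A) = (A + Aᵀ)/2. -/
open Real

/-- The Frobenius norm of a real `d × d` matrix. -/
noncomputable def frob {d : ℕ} (F : Matrix (Fin d) (Fin d) ℝ) : ℝ :=
  Real.sqrt (∑ i, ∑ j, (F i j)^2)

/-- The special orthogonal group `SO(d)` as a set of matrices. -/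
def SOd (d : ℕ) : Set (Matrix (Fin d) (Fin d) ℝ) :=
  {R | R.transpose * R = 1 ∧ R.det = 1}

/-- The Frobenius distance of a matrix to `SO(d)`. -/
noncomputable def distSO {d : ℕ} (F : Matrix (Fin d) (Fin d) ℝ) : ℝ :=
  sInf ((fun R => frob (F - R)) '' SOd d)

/-- The symmetric part `sym(A) = (A + Aᵀ)/2` of a matrix. -/
noncomputable def symPart {d : ℕ} (A : Matrix (Fin d) (Fin d) ℝ) : Matrix (Fin d) (Fin d) ℝ :=
  (1/2 : ℝ) • (A + A.transpose)

/-! Writing `F = R (1 + A)` with `A = Rᵀ F - 1`, both `|F - R|` and `dist(F, SO(d))` are invariant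
under left multiplication by rotations, so it suffices to take `R = 1`.
Upper bound: the rotation `exp W`, with `W` the skew part of `A`, satisfies
`1 + A - exp W = sym A - (exp W - 1 - W)` and `|exp W - 1 - W| ≤ |W|²`.
Lower bound: for a rotation `Q`, `sym (Q - 1) = Qᵀ (Q - 1)² / 2` is quadratically small, so
`|sym A| ≤ |1 + A - Q| + |Q - 1|² / 2`, and only rotations with `|Q - 1| ≤ 2 |A|` matter. -/

open scoped Matrix Nat
open NormedSpace

attribute [local instance] Matrix.frobeniusNormedAddCommGroup Matrix.frobeniusNormedSpace
  Matrix.frobeniusNormedRing Matrix.frobeniusNormedAlgebra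

theorem NormedSpace.norm_exp_sub_one_sub_le {𝔸 : Type*} [NormedRing 𝔸] [NormedAlgebra ℝ 𝔸]
    [CompleteSpace 𝔸] (x : 𝔸) : ‖exp x - 1 - x‖ ≤ Real.exp ‖x‖ - 1 - ‖x‖ := by
  have hx : HasSum (fun n => ((n + 2)! : ℝ)⁻¹ • x ^ (n + 2)) (exp x - 1 - x) := by
    have := (hasSum_nat_add_iff' 2).mpr (exp_series_hasSum_exp' (𝕂 := ℝ) x)
    simpa [Finset.sum_range_succ, sub_sub] using this
  have hr : HasSum (fun n => ((n + 2)! : ℝ)⁻¹ • ‖x‖ ^ (n + 2)) (Real.exp ‖x‖ - 1 - ‖x‖) := by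
    have := (hasSum_nat_add_iff' 2).mpr (exp_series_hasSum_exp' (𝕂 := ℝ) ‖x‖)
    simpa [Finset.sum_range_succ, sub_sub, ← Real.exp_eq_exp_ℝ] using this
  refine hx.norm_le_of_bounded hr fun n => ?_
  rw [norm_smul, Real.norm_of_nonneg (by positivity), smul_eq_mul]
  exact mul_le_mul_of_nonneg_left (norm_pow_le' x (by omega)) (by positivity)

theorem NormedSpace.norm_exp_sub_one_sub_le_sq {𝔸 : Type*} [NormedRing 𝔸] [NormedAlgebra ℝ 𝔸]
    [CompleteSpace 𝔸] {x : 𝔸} (hx : ‖x‖ ≤ 1) : ‖exp x - 1 - x‖ ≤ ‖x‖ ^ 2 :=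
  (norm_exp_sub_one_sub_le x).trans <|
    (le_abs_self _).trans (Real.abs_exp_sub_one_sub_id_le (by rwa [abs_norm]))

namespace Matrix
variable {l m n : Type*} [Fintype l] [Fintype m] [Fintype n]

theorem frobenius_norm_sq_eq_sum (A : Matrix m n ℝ) : ‖A‖ ^ 2 = ∑ i, ∑ j, A i j ^ 2 := by
  rw [frobenius_norm_def, ← Real.sqrt_eq_rpow, Real.sq_sqrt (by positivity)]
  simp

theorem frobenius_norm_sq_eq_trace (A : Matrix m n ℝ) : ‖A‖ ^ 2 = (Aᵀ * A).trace := by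
  rw [frobenius_norm_sq_eq_sum, Finset.sum_comm]
  simp [trace, mul_apply, sq]

theorem frobenius_norm_mul_of_transpose_mul_self [DecidableEq n] {Q : Matrix m n ℝ}
    (hQ : Qᵀ * Q = 1) (X : Matrix n l ℝ) : ‖Q * X‖ = ‖X‖ := by
  refine (sq_eq_sq₀ (norm_nonneg _) (norm_nonneg _)).mp ?_
  rw [frobenius_norm_sq_eq_trace, frobenius_norm_sq_eq_trace, transpose_mul, Matrix.mul_assoc,
    ← Matrix.mul_assoc Qᵀ, hQ, Matrix.one_mul]

end Matrix

variable {d : ℕ}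

theorem frob_eq_norm (F : Matrix (Fin d) (Fin d) ℝ) : frob F = ‖F‖ := by
  rw [frob, ← Matrix.frobenius_norm_sq_eq_sum, Real.sqrt_sq (norm_nonneg F)]

theorem symPart_add (X Y : Matrix (Fin d) (Fin d) ℝ) :
    symPart (X + Y) = symPart X + symPart Y := by
  simp only [symPart, Matrix.transpose_add, ← smul_add]
  abel_nf

theorem norm_symPart_le (X : Matrix (Fin d) (Fin d) ℝ) : ‖symPart X‖ ≤ ‖X‖ := by
  have h := norm_add_le X Xᵀ
  rw [Matrix.frobenius_norm_transpose] at h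
  rw [symPart, norm_smul, Real.norm_of_nonneg (by norm_num)]
  linarith

theorem norm_symPart_sub_one_le {Q : Matrix (Fin d) (Fin d) ℝ} (hQ : Qᵀ * Q = 1) :
    ‖symPart (Q - 1)‖ ≤ ‖Q - 1‖ ^ 2 / 2 := by
  have hQt : Qᵀᵀ * Qᵀ = 1 := by rw [Matrix.transpose_transpose]; exact mul_eq_one_comm.mp hQ
  have hsym : symPart (Q - 1) = (1 / 2 : ℝ) • (Qᵀ * ((Q - 1) * (Q - 1))) := by
    have : Qᵀ * ((Q - 1) * (Q - 1)) = Qᵀ * Q * Q - 2 * (Qᵀ * Q) + Qᵀ := by noncomm_ring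
    rw [this, hQ, symPart, Matrix.transpose_sub, Matrix.transpose_one]
    congr 1
    noncomm_ring
  rw [hsym, norm_smul, Real.norm_of_nonneg (by norm_num),
    Matrix.frobenius_norm_mul_of_transpose_mul_self hQt]
  have := Matrix.frobenius_norm_mul (Q - 1) (Q - 1)
  nlinarith

theorem one_mem_SOd : (1 : Matrix (Fin d) (Fin d) ℝ) ∈ SOd d :=
  ⟨by simp, Matrix.det_one⟩

theorem mul_transpose_self_of_mem_SOd {R : Matrix (Fin d) (Fin d) ℝ} (hR : R ∈ SOd d) :
    R * Rᵀ = 1 :=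
  mul_eq_one_comm.mp hR.1

theorem transpose_mem_SOd {R : Matrix (Fin d) (Fin d) ℝ} (hR : R ∈ SOd d) : Rᵀ ∈ SOd d :=
  ⟨by rw [Matrix.transpose_transpose, mul_transpose_self_of_mem_SOd hR],
    by rw [Matrix.det_transpose, hR.2]⟩

theorem mul_mem_SOd {R Q : Matrix (Fin d) (Fin d) ℝ} (hR : R ∈ SOd d) (hQ : Q ∈ SOd d) :
    R * Q ∈ SOd d :=
  ⟨by rw [Matrix.transpose_mul, Matrix.mul_assoc, ← Matrix.mul_assoc Rᵀ, hR.1, Matrix.one_mul,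
      hQ.1],
    by rw [Matrix.det_mul, hR.2, hQ.2, one_mul]⟩

/-- `det (exp W) = det (exp (W / 2)) ^ 2` is nonnegative, and it is `±1` by orthogonality. -/
theorem exp_mem_SOd {W : Matrix (Fin d) (Fin d) ℝ} (hW : Wᵀ = -W) : exp W ∈ SOd d := by
  have horth : (exp W)ᵀ * exp W = 1 := by
    rw [← Matrix.exp_transpose, hW, ← Matrix.exp_add_of_commute _ _ (Commute.refl W).neg_left,
      neg_add_cancel, NormedSpace.exp_zero]
  refine ⟨horth, ?_⟩
  have hsq : (exp W).det ^ 2 = 1 := by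
    simpa [Matrix.det_mul, Matrix.det_transpose, sq] using congrArg Matrix.det horth
  have hhalf : exp W = exp ((1 / 2 : ℝ) • W) ^ 2 := by
    rw [← Matrix.exp_nsmul, two_nsmul, ← add_smul]
    norm_num
  have hnonneg : 0 ≤ (exp W).det := by rw [hhalf, Matrix.det_pow]; positivity
  nlinarith

theorem distSO_le (F : Matrix (Fin d) (Fin d) ℝ) {Q : Matrix (Fin d) (Fin d) ℝ}
    (hQ : Q ∈ SOd d) : distSO F ≤ ‖F - Q‖ := by
  rw [← frob_eq_norm]
  exact csInf_le ⟨0, by rintro _ ⟨Q, -, rfl⟩; exact Real.sqrt_nonneg _⟩ ⟨Q, hQ, rfl⟩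

theorem le_distSO {F : Matrix (Fin d) (Fin d) ℝ} {c : ℝ} (h : ∀ Q ∈ SOd d, c ≤ ‖F - Q‖) :
    c ≤ distSO F :=
  le_csInf ⟨_, 1, one_mem_SOd, rfl⟩ fun _ ⟨Q, hQ, hc⟩ =>
    hc ▸ (frob_eq_norm (F - Q)).ge.trans' (h Q hQ)

theorem distSO_mul_left_le {R : Matrix (Fin d) (Fin d) ℝ} (hR : R ∈ SOd d)
    (G : Matrix (Fin d) (Fin d) ℝ) : distSO (R * G) ≤ distSO G :=
  le_distSO fun Q hQ => by
    simpa [← Matrix.mul_sub, Matrix.frobenius_norm_mul_of_transpose_mul_self hR.1]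
      using distSO_le (R * G) (mul_mem_SOd hR hQ)

theorem distSO_mul_left {R : Matrix (Fin d) (Fin d) ℝ} (hR : R ∈ SOd d)
    (G : Matrix (Fin d) (Fin d) ℝ) : distSO (R * G) = distSO G := by
  refine le_antisymm (distSO_mul_left_le hR G) ?_
  simpa [← Matrix.mul_assoc, hR.1] using distSO_mul_left_le (transpose_mem_SOd hR) (R * G)

theorem norm_symPart_le_distSO_one_add (A : Matrix (Fin d) (Fin d) ℝ) :
    ‖symPart A‖ ≤ distSO (1 + A) + 2 * ‖A‖ ^ 2 := by
  suffices h : ∀ Q ∈ SOd d, ‖symPart A‖ - 2 * ‖A‖ ^ 2 ≤ ‖1 + A - Q‖ by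
    linarith [le_distSO h]
  intro Q hQ
  rcases le_or_gt ‖A‖ ‖1 + A - Q‖ with hfar | hnear
  · linarith [norm_symPart_le A, sq_nonneg ‖A‖]
  · have hQ1 : ‖Q - 1‖ ≤ 2 * ‖A‖ := by
      calc ‖Q - 1‖ = ‖A - (1 + A - Q)‖ := by congr 1; abel
        _ ≤ ‖A‖ + ‖1 + A - Q‖ := norm_sub_le _ _
        _ ≤ 2 * ‖A‖ := by linarith
    have hsplit : symPart A = symPart (1 + A - Q) + symPart (Q - 1) := by
      rw [← symPart_add]; abel_nf
    calc ‖symPart A‖ - 2 * ‖A‖ ^ 2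
        ≤ ‖symPart (1 + A - Q)‖ + ‖symPart (Q - 1)‖ - 2 * ‖A‖ ^ 2 := by
          rw [hsplit]; linarith [norm_add_le (symPart (1 + A - Q)) (symPart (Q - 1))]
      _ ≤ ‖1 + A - Q‖ + ‖Q - 1‖ ^ 2 / 2 - 2 * ‖A‖ ^ 2 := by
          linarith [norm_symPart_le (1 + A - Q), norm_symPart_sub_one_le hQ.1]
      _ ≤ ‖1 + A - Q‖ := by nlinarith [norm_nonneg (Q - 1)]

theorem distSO_one_add_le_norm_symPart (A : Matrix (Fin d) (Fin d) ℝ) :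
    distSO (1 + A) ≤ ‖symPart A‖ + ‖A‖ ^ 2 := by
  rcases le_or_gt ‖A‖ 1 with hsmall | hlarge
  · set W : Matrix (Fin d) (Fin d) ℝ := (1 / 2 : ℝ) • (A - Aᵀ) with hW
    have hskew : Wᵀ = -W := by
      rw [hW, Matrix.transpose_smul, Matrix.transpose_sub, Matrix.transpose_transpose, ← smul_neg,
        neg_sub]
    have hWA : ‖W‖ ≤ ‖A‖ := by
      have h := norm_sub_le A Aᵀ
      rw [Matrix.frobenius_norm_transpose] at h
      rw [hW, norm_smul, Real.norm_of_nonneg (by norm_num)]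
      linarith
    have hA : A = symPart A + W := by
      rw [symPart, hW, ← smul_add]
      module
    calc distSO (1 + A) ≤ ‖1 + A - exp W‖ := distSO_le _ (exp_mem_SOd hskew)
      _ = ‖symPart A - (exp W - 1 - W)‖ := by
          congr 1; nth_rewrite 1 [hA]; abel
      _ ≤ ‖symPart A‖ + ‖W‖ ^ 2 := by
          -- typed against the goal: the Frobenius and product topologies agree only after unfolding
          have hexp : ‖exp W - 1 - W‖ ≤ ‖W‖ ^ 2 := norm_exp_sub_one_sub_le_sq (hWA.trans hsmall)
          linarith [norm_sub_le (symPart A) (exp W - 1 - W)]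
      _ ≤ ‖symPart A‖ + ‖A‖ ^ 2 := by gcongr
  · calc distSO (1 + A) ≤ ‖1 + A - 1‖ := distSO_le _ one_mem_SOd
      _ ≤ ‖symPart A‖ + ‖A‖ ^ 2 := by
          rw [add_sub_cancel_left]; nlinarith [norm_nonneg (symPart A)]

/-- Linearization formula: there is `C > 0` (depending only on `d`) with
`| |sym(Rᵀ F − Id)| − dist(F, SO(d)) | ≤ C |F − R|²` for all `F` and all `R ∈ SO(d)`. -/
theorem linearization_formula_SO (d : ℕ) :
    ∃ C > (0:ℝ), ∀ (F R : Matrix (Fin d) (Fin d) ℝ), R ∈ SOd d →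
      |frob (symPart (R.transpose * F - 1)) - distSO F| ≤ C * (frob (F - R))^2 := by
  refine ⟨2, two_pos, fun F R hR => ?_⟩
  have hRRt := mul_transpose_self_of_mem_SOd hR
  have hFR : ‖F - R‖ = ‖Rᵀ * F - 1‖ := by
    rw [← Matrix.frobenius_norm_mul_of_transpose_mul_self hR.1 (Rᵀ * F - 1), Matrix.mul_sub,
      ← Matrix.mul_assoc, hRRt, Matrix.one_mul, Matrix.mul_one]
  have hdist : distSO F = distSO (1 + (Rᵀ * F - 1)) := by
    rw [add_sub_cancel, ← distSO_mul_left hR (Rᵀ * F), ← Matrix.mul_assoc, hRRt, Matrix.one_mul]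
  rw [frob_eq_norm, frob_eq_norm, hFR, hdist, abs_le]
  constructor <;> linarith [norm_symPart_le_distSO_one_add (Rᵀ * F - 1),
    distSO_one_add_le_norm_symPart (Rᵀ * F - 1)]
end

section
/- Let L ⊂ ℝ³ be an affine plane with unit normal ν = (ν₁,ν₂,ν₃) satisfying |ν₃| ≤ √(1-θ²) for some θ ∈ (0,1), let ρ > 0, η > 0, and let W = (L)_{3ηρ} ∩ ∂Q_{(1+6η)ρ} ∩ {x₃ = (1+6η)ρ/2}, where (L)_{3ηρ} is the open 3ηρ-neighborhood of L and Q_{(1+6η)ρ} the cube of sidelength (1+6η)ρ centered at 0. Then ℋ²(W) ≤ C η ρ² / θ for an absolute constant C > 0. -/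
open Set MeasureTheory Real RealInnerProductSpace
open scoped ENNReal

/-!
The top face `{x₃ = s}` of the cube `Q = [-s, s]³` is a square, and the part of it within distance
`w` of the plane `⟪x, ν⟫ = c` lies in a strip of the square cut out by the linear inequality
`|ν₀ x₀ + ν₁ x₁ + ν₂ s - c| ≤ w`. Since `|ν₂| ≤ √(1 - θ²)`, the horizontal part `(ν₀, ν₁)` of the
normal has length at least `θ`, so one of its coordinates is at least `θ / 2` in absolute value.
Slicing the square in the direction of that coordinate (Fubini), every slice of the strip is an
interval of length at most `2w / (θ / 2)`, hence the strip has area `O(s w / θ) = O(η ρ² / θ)`.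
-/

lemma measurableSet_slab_inter_vertical_band (a b d w s : ℝ) :
    MeasurableSet {p : ℝ × ℝ | |a * p.1 + b * p.2 + d| ≤ w ∧ |p.1| ≤ s} :=
  (measurableSet_le (by fun_prop : Measurable fun p : ℝ × ℝ => |a * p.1 + b * p.2 + d|)
    measurable_const).inter (measurableSet_le (by fun_prop : Measurable fun p : ℝ × ℝ => |p.1|)
    measurable_const)

lemma volume_slab_inter_vertical_band_le (a b d w s : ℝ) (hb : b ≠ 0) :
    volume {p : ℝ × ℝ | |a * p.1 + b * p.2 + d| ≤ w ∧ |p.1| ≤ s}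
      ≤ ENNReal.ofReal (2 * s) * ENNReal.ofReal (2 * (w / |b|)) := by
  set band := {p : ℝ × ℝ | |a * p.1 + b * p.2 + d| ≤ w ∧ |p.1| ≤ s}
  have slice_le (x : ℝ) : volume (Prod.mk x ⁻¹' band) ≤
      (Icc (-s) s).indicator (fun _ => ENNReal.ofReal (2 * (w / |b|))) x := by
    by_cases hx : |x| ≤ s
    · rw [indicator_of_mem (show x ∈ Icc (-s) s from abs_le.mp hx),
        ← Real.volume_closedBall (-(a * x + d) / b)]
      refine measure_mono fun y hy => ?_
      rw [Metric.mem_closedBall, Real.dist_eq, le_div_iff₀ (abs_pos.mpr hb), ← abs_mul,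
        show (y - -(a * x + d) / b) * b = a * x + b * y + d by field_simp; ring]
      exact hy.1
    · have : Prod.mk x ⁻¹' band = ∅ :=
        eq_empty_of_forall_notMem fun y hy => hx hy.2
      simp [this]
  calc volume band
      ≤ ∫⁻ x, (Icc (-s) s).indicator (fun _ => ENNReal.ofReal (2 * (w / |b|))) x := by
        rw [Measure.volume_eq_prod,
          Measure.prod_apply (measurableSet_slab_inter_vertical_band a b d w s)]
        exact lintegral_mono slice_le
    _ = ENNReal.ofReal (2 * s) * ENNReal.ofReal (2 * (w / |b|)) := by
        rw [lintegral_indicator_const measurableSet_Icc, Real.volume_Icc, sub_neg_eq_add, ← two_mul,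
          mul_comm]

lemma volume_slab_inter_square_le {a b d w s t : ℝ} (hw : 0 ≤ w) (ht : 0 < t)
    (hab : t ≤ |a| ∨ t ≤ |b|) :
    volume {p : ℝ × ℝ | |a * p.1 + b * p.2 + d| ≤ w ∧ |p.1| ≤ s ∧ |p.2| ≤ s}
      ≤ ENNReal.ofReal (2 * s) * ENNReal.ofReal (2 * (w / t)) := by
  have band_le {a b : ℝ} (hb : t ≤ |b|) :
      volume {p : ℝ × ℝ | |a * p.1 + b * p.2 + d| ≤ w ∧ |p.1| ≤ s}
        ≤ ENNReal.ofReal (2 * s) * ENNReal.ofReal (2 * (w / t)) := by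
    refine (volume_slab_inter_vertical_band_le a b d w s (abs_pos.mp (ht.trans_le hb))).trans ?_
    gcongr
  rcases hab with ha | hb
  · have swap_volume : MeasurePreserving (Prod.swap : ℝ × ℝ → ℝ × ℝ) volume volume := by
      rw [Measure.volume_eq_prod]
      exact Measure.measurePreserving_swap
    calc _ ≤ volume (Prod.swap ⁻¹' {p : ℝ × ℝ | |b * p.1 + a * p.2 + d| ≤ w ∧ |p.1| ≤ s}) :=
          measure_mono <| by
            rintro p ⟨hp, -, hp₂⟩
            exact show |b * p.2 + a * p.1 + d| ≤ w ∧ |p.2| ≤ s from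
              ⟨by rwa [add_comm (b * p.2)], hp₂⟩
      _ = volume {p : ℝ × ℝ | |b * p.1 + a * p.2 + d| ≤ w ∧ |p.1| ≤ s} :=
          swap_volume.measure_preimage
            (measurableSet_slab_inter_vertical_band b a d w s).nullMeasurableSet
      _ ≤ _ := band_le ha
  · exact (measure_mono <| by rintro p ⟨hp, hp₁, -⟩; exact ⟨hp, hp₁⟩).trans (band_le hb)

/- `ℝ × ℝ` carries the sup metric, for which `μH[2] = volume` (`hausdorffMeasure_prod_real`), so
this embedding is not an isometry but only Lipschitz. -/
noncomputable def horizontalEmbedding (h : ℝ) (p : ℝ × ℝ) : EuclideanSpace ℝ (Fin 3) :=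
  !₂[p.1, p.2, h]

lemma lipschitzWith_horizontalEmbedding (h : ℝ) : LipschitzWith 2 (horizontalEmbedding h) := by
  refine LipschitzWith.of_dist_le_mul fun p q => ?_
  have h1 : |p.1 - q.1| ≤ dist p q := (le_max_left _ _ : dist p.1 q.1 ≤ _)
  have h2 : |p.2 - q.2| ≤ dist p q := (le_max_right _ _ : dist p.2 q.2 ≤ _)
  rw [EuclideanSpace.dist_eq, Fin.sum_univ_three, NNReal.coe_ofNat]
  refine Real.sqrt_le_iff.mpr ⟨by positivity, ?_⟩
  simp only [horizontalEmbedding, Matrix.cons_val_zero, Matrix.cons_val_one, Matrix.cons_val,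
    Real.dist_eq, sq_abs, dist_self]
  nlinarith [abs_nonneg (p.1 - q.1), abs_nonneg (p.2 - q.2), sq_abs (p.1 - q.1), sq_abs (p.2 - q.2)]

lemma hausdorffMeasure_image_horizontalEmbedding_le (h : ℝ) (T : Set (ℝ × ℝ)) :
    μH[2] (horizontalEmbedding h '' T) ≤ 4 * volume T := by
  calc μH[2] (horizontalEmbedding h '' T) ≤ (2 : ℝ≥0∞) ^ (2 : ℝ) * μH[2] T :=
        (lipschitzWith_horizontalEmbedding h).hausdorffMeasure_image_le zero_le_two T
    _ = 4 * volume T := by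
        rw [hausdorffMeasure_prod_real, ENNReal.rpow_two]
        norm_num

lemma abs_inner_sub_lt_of_infDist_lt {E : Type*} [NormedAddCommGroup E] [InnerProductSpace ℝ E]
    {ν x : E} {c r : ℝ} (hν : ‖ν‖ = 1) (hx : Metric.infDist x {y | ⟪y, ν⟫ = c} < r) :
    |⟪x, ν⟫ - c| < r := by
  have hne : ({y | ⟪y, ν⟫ = c} : Set E).Nonempty :=
    ⟨c • ν, by simp [real_inner_smul_left, hν]⟩
  obtain ⟨y, hy, hxy⟩ := (Metric.infDist_lt_iff hne).mp hx
  calc |⟪x, ν⟫ - c| = |⟪x - y, ν⟫| := by rw [inner_sub_left, hy.out]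
    _ ≤ ‖x - y‖ * ‖ν‖ := abs_real_inner_le_norm _ _
    _ < r := by rwa [hν, mul_one, ← dist_eq_norm]

lemma isClosed_setOf_forall_abs_le {ι : Type*} (r : ℝ) :
    IsClosed {x : EuclideanSpace ℝ ι | ∀ i, |x i| ≤ r} := by
  simp only [ofPred_forall]
  exact isClosed_iInter fun i => isClosed_le (by fun_prop) continuous_const

lemma thickened_plane_inter_top_face_subset {ν : EuclideanSpace ℝ (Fin 3)} (hν : ‖ν‖ = 1)
    (c w s : ℝ) :
    {x | Metric.infDist x {y | ⟪y, ν⟫ = c} < w} ∩ frontier {x | ∀ i, |x i| ≤ s} ∩ {x | x 2 = s}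
      ⊆ horizontalEmbedding s ''
          {p : ℝ × ℝ | |ν 0 * p.1 + ν 1 * p.2 + (ν 2 * s - c)| ≤ w ∧ |p.1| ≤ s ∧ |p.2| ≤ s} := by
  rintro x ⟨⟨hxL, hxQ⟩, hx₂ : x 2 = s⟩
  have hxQ : ∀ i, |x i| ≤ s := (isClosed_setOf_forall_abs_le s).frontier_subset hxQ
  have hinner : ⟪x, ν⟫ = ν 0 * x 0 + ν 1 * x 1 + ν 2 * x 2 := by
    simp [PiLp.inner_apply, Fin.sum_univ_three]
  refine ⟨(x 0, x 1), ⟨?_, hxQ 0, hxQ 1⟩, ?_⟩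
  · have := abs_inner_sub_lt_of_infDist_lt hν hxL
    rw [hinner, hx₂] at this
    exact le_of_lt (by simpa only [add_sub_assoc] using this)
  · ext i
    fin_cases i <;> simp [horizontalEmbedding, hx₂]

lemma sq_le_sq_add_sq_of_abs_le_sqrt {ν : EuclideanSpace ℝ (Fin 3)} (hν : ‖ν‖ = 1) {θ : ℝ}
    (hθ : θ ^ 2 ≤ 1) (h : |ν 2| ≤ √(1 - θ ^ 2)) : θ ^ 2 ≤ ν 0 ^ 2 + ν 1 ^ 2 := by
  have hsum : ν 0 ^ 2 + ν 1 ^ 2 + ν 2 ^ 2 = 1 := by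
    have := EuclideanSpace.norm_sq_eq ν
    rw [hν, Fin.sum_univ_three, one_pow, eq_comm] at this
    simpa only [Real.norm_eq_abs, sq_abs] using this
  have : ν 2 ^ 2 ≤ 1 - θ ^ 2 := by
    simpa [sq_abs, Real.sq_sqrt (sub_nonneg.mpr hθ)] using pow_le_pow_left₀ (abs_nonneg _) h 2
  linarith

lemma half_le_abs_or_half_le_abs {a b θ : ℝ} (h : θ ^ 2 ≤ a ^ 2 + b ^ 2) :
    θ / 2 ≤ |a| ∨ θ / 2 ≤ |b| := by
  by_contra! hlt
  nlinarith [sq_abs a, sq_abs b, abs_nonneg a, abs_nonneg b]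

/-- There is an absolute constant `C > 0` such that for every plane
`L = {y : ⟪y, ν⟫ = c}` with `|ν₃| ≤ √(1 − θ²)`, the portion
`W = (L)_{3ηρ} ∩ ∂Q_{(1+6η)ρ} ∩ {x₃ = (1+6η)ρ/2}` of the top face of the cube within
distance `3ηρ` of `L` satisfies `ℋ²(W) ≤ C η ρ² / θ`. -/
theorem top_face_strip_area_estimate :
    ∃ C > (0:ℝ), ∀ (θ ρ η : ℝ), θ ∈ Set.Ioo (0:ℝ) 1 → 0 < ρ → 0 < η → η ≤ 1 →
      ∀ (ν : EuclideanSpace ℝ (Fin 3)) (c : ℝ), ‖ν‖ = 1 →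
        |ν 2| ≤ Real.sqrt (1 - θ^2) →
        μH[2] ({x : EuclideanSpace ℝ (Fin 3) |
              Metric.infDist x {y : EuclideanSpace ℝ (Fin 3) | ⟪y, ν⟫ = c} < 3*η*ρ}
            ∩ frontier {x : EuclideanSpace ℝ (Fin 3) | ∀ i, |x i| ≤ (1+6*η)*ρ/2}
            ∩ {x : EuclideanSpace ℝ (Fin 3) | x 2 = (1+6*η)*ρ/2})
          ≤ ENNReal.ofReal (C * η * ρ^2 / θ) := by
  refine ⟨336, by norm_num, fun θ ρ η ⟨hθ₀, hθ₁⟩ hρ hη hη₁ ν c hν hν₂ => ?_⟩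
  have hnormal : θ / 2 ≤ |ν 0| ∨ θ / 2 ≤ |ν 1| :=
    half_le_abs_or_half_le_abs (sq_le_sq_add_sq_of_abs_le_sqrt hν (by nlinarith) hν₂)
  calc _ ≤ μH[2] (horizontalEmbedding ((1 + 6 * η) * ρ / 2) '' _) :=
        measure_mono (thickened_plane_inter_top_face_subset hν c _ _)
    _ ≤ 4 * volume _ := hausdorffMeasure_image_horizontalEmbedding_le _ _
    _ ≤ 4 * (ENNReal.ofReal (2 * ((1 + 6 * η) * ρ / 2)) *
          ENNReal.ofReal (2 * (3 * η * ρ / (θ / 2)))) := by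
        gcongr
        exact volume_slab_inter_square_le (by positivity) (by positivity) hnormal
    _ = ENNReal.ofReal (48 * (1 + 6 * η) * η * ρ ^ 2 / θ) := by
        rw [← ENNReal.ofReal_mul (by positivity), ← ENNReal.ofReal_ofNat,
          ← ENNReal.ofReal_mul (by norm_num)]
        congr 1
        field_simp
        ring
    _ ≤ ENNReal.ofReal (336 * η * ρ ^ 2 / θ) := by
        gcongr
        linarith
end
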